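/- arXiv:2207.00045 — 2 statements merged into one kernel-verified Lean document; each statement's English description precedes it below -/
import Mathlib

section
/- For any Gaussian integer β = x + iy with (x,y) ≠ (0,0), the rational integer ν(β) = (x² + y²)/gcd(x,y) is the smallest positive rational integer divisible by β in ℤ[i], and moreover ν(β) divides every rational integer that is divisible by β. -/
/-!
Multiplying by the conjugate, `β ∣ n` in `ℤ[i]` iff `N(β) ∣ n * conj β`, i.e. iff `N(β)` divides
both `n x` and `n y`, i.e. iff `N(β) ∣ n * gcd(x, y)`. Since `N(β) = ν(β) * gcd(x, y)`, this says
exactly `ν(β) ∣ n`; both claims follow, as `ν(β) > 0`.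
-/

/-- ν(x+iy) = (x²+y²)/gcd(x,y) for a Gaussian integer. -/
def nu (β : GaussianInt) : ℤ := (β.re ^ 2 + β.im ^ 2) / Int.gcd β.re β.im

namespace Zsqrtd

theorem dvd_intCast_iff_norm_dvd {d : ℤ} [IsDomain (ℤ√d)] {β : ℤ√d} (hβ : β ≠ 0) (n : ℤ) :
    β ∣ (n : ℤ√d) ↔ β.norm ∣ n * β.re ∧ β.norm ∣ n * β.im := by
  rw [← mul_dvd_mul_iff_right (star_ne_zero.mpr hβ), ← norm_eq_mul_conj, intCast_dvd]
  simp [re_mul, im_mul]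

end Zsqrtd

theorem Int.dvd_mul_gcd_iff (a n x y : ℤ) : a ∣ n * x ∧ a ∣ n * y ↔ a ∣ n * Int.gcd x y := by
  rw [← Int.dvd_coe_gcd_iff, Int.gcd_mul_left, ← Int.natAbs_natCast (Int.gcd x y),
    ← Int.natAbs_mul, Int.dvd_natAbs, Int.natAbs_natCast]

theorem nu_mul_gcd (β : GaussianInt) : nu β * Int.gcd β.re β.im = β.norm := by
  have hg : (Int.gcd β.re β.im : ℤ) ∣ β.re ^ 2 + β.im ^ 2 :=
    dvd_add (dvd_pow (Int.gcd_dvd_left _ _) two_ne_zero)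
      (dvd_pow (Int.gcd_dvd_right _ _) two_ne_zero)
  rw [nu, Int.ediv_mul_cancel hg, Zsqrtd.norm_def]
  ring

theorem gcd_re_im_ne_zero {β : GaussianInt} (hβ : β ≠ 0) : Int.gcd β.re β.im ≠ 0 := by
  rw [Ne, Int.gcd_eq_zero_iff]
  exact fun h => hβ (Zsqrtd.ext h.1 h.2)

theorem dvd_intCast_iff_nu_dvd {β : GaussianInt} (hβ : β ≠ 0) (n : ℤ) :
    β ∣ (n : GaussianInt) ↔ nu β ∣ n := by
  have hg : (Int.gcd β.re β.im : ℤ) ≠ 0 := Int.natCast_ne_zero.mpr (gcd_re_im_ne_zero hβ)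
  rw [Zsqrtd.dvd_intCast_iff_norm_dvd hβ, Int.dvd_mul_gcd_iff, ← nu_mul_gcd,
    mul_dvd_mul_iff_right hg]

theorem nu_pos {β : GaussianInt} (hβ : β ≠ 0) : 0 < nu β := by
  have hg : 0 < (Int.gcd β.re β.im : ℤ) :=
    Int.natCast_pos.mpr (Nat.pos_of_ne_zero (gcd_re_im_ne_zero hβ))
  have hN : 0 < nu β * Int.gcd β.re β.im := nu_mul_gcd β ▸ GaussianInt.norm_pos.mpr hβ
  exact pos_of_mul_pos_left hN hg.le

theorem nu_least_and_divides (β : GaussianInt) (hβ : ¬(β.re = 0 ∧ β.im = 0)) :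
    IsLeast {n : ℤ | 0 < n ∧ β ∣ (n : GaussianInt)} (nu β) ∧
      ∀ n : ℤ, β ∣ (n : GaussianInt) → nu β ∣ n := by
  have hβ0 : β ≠ 0 := fun h => hβ ⟨h ▸ rfl, h ▸ rfl⟩
  have hdvd := dvd_intCast_iff_nu_dvd hβ0
  refine ⟨⟨⟨nu_pos hβ0, (hdvd _).mpr dvd_rfl⟩, ?_⟩, fun n => (hdvd n).mp⟩
  rintro n ⟨hn, hβn⟩
  exact Int.le_of_dvd hn ((hdvd n).mp hβn)
end

section
/- Let α₀, δ be coprime Gaussian integers with δ = c + di, gcd(c,d) = 1, and α_k = α₀ + k·δ. If two distinct terms α_s and α_t of the sequence share a common non-unit Gaussian divisor β, then ν(β) divides s − t; in particular ν(β) ≤ |s − t|. -/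
theorem IsCoprime.dvd_sub_of_dvd_add_mul {R : Type*} [CommRing R] {a d b s t : R}
    (h : IsCoprime a d) (hs : b ∣ a + s * d) (ht : b ∣ a + t * d) : b ∣ s - t := by
  have hbd : IsCoprime b d := (h.add_mul_right_left s).of_isCoprime_of_dvd_left hs
  refine hbd.dvd_of_dvd_mul_right ?_
  have hdiff : (s - t) * d = (a + s * d) - (a + t * d) := by ring
  exact hdiff ▸ dvd_sub hs ht

namespace GaussianInt

theorem nu_mul_gcd (β : GaussianInt) : nu β * Int.gcd β.re β.im = Zsqrtd.norm β := by
  have hgcd : (Int.gcd β.re β.im : ℤ) ∣ β.re ^ 2 + β.im ^ 2 :=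
    dvd_add (dvd_pow (Int.gcd_dvd_left _ _) two_ne_zero)
      (dvd_pow (Int.gcd_dvd_right _ _) two_ne_zero)
  rw [nu, Int.ediv_mul_cancel hgcd, Zsqrtd.norm_def]
  ring

theorem norm_dvd_mul_gcd_of_dvd_intCast {β : GaussianInt} {n : ℤ} (h : β ∣ (n : GaussianInt)) :
    Zsqrtd.norm β ∣ n * Int.gcd β.re β.im := by
  have hconj : (Zsqrtd.norm β : GaussianInt) ∣ n * star β := by
    rw [Zsqrtd.norm_eq_mul_conj]
    exact mul_dvd_mul_right h _
  obtain ⟨hre, him⟩ := (Zsqrtd.intCast_dvd _ _).1 hconj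
  simp only [Zsqrtd.re_mul, Zsqrtd.im_mul, Zsqrtd.re_intCast, Zsqrtd.im_intCast, Zsqrtd.re_star,
    Zsqrtd.im_star, zero_mul, mul_zero, neg_zero, add_zero, mul_neg, dvd_neg] at hre him
  rw [Int.gcd_eq_gcd_ab, mul_add, ← mul_assoc, ← mul_assoc]
  exact dvd_add (hre.mul_right _) (him.mul_right _)

theorem nu_dvd_of_dvd_intCast {β : GaussianInt} {n : ℤ} (h : β ∣ (n : GaussianInt)) : nu β ∣ n := by
  rcases eq_or_ne β 0 with rfl | hβ
  · rw [zero_dvd_iff, Int.cast_eq_zero] at h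
    exact h ▸ dvd_zero _
  have hgcd : (Int.gcd β.re β.im : ℤ) ≠ 0 := by
    simpa [Int.gcd_eq_zero_iff, Zsqrtd.ext_iff] using hβ
  rw [← mul_dvd_mul_iff_right hgcd, nu_mul_gcd]
  exact norm_dvd_mul_gcd_of_dvd_intCast h

end GaussianInt

theorem common_divisor_nu_dvd_diff_general (α₀ δ : GaussianInt) (h : IsCoprime α₀ δ)
    (s t : ℤ) (hst : s ≠ t) (β : GaussianInt)
    (hs : β ∣ α₀ + (s : GaussianInt) * δ) (ht : β ∣ α₀ + (t : GaussianInt) * δ) :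
    nu β ∣ s - t ∧ nu β ≤ |s - t| := by
  have hβ : β ∣ ((s - t : ℤ) : GaussianInt) := by
    push_cast
    exact h.dvd_sub_of_dvd_add_mul hs ht
  have hdvd : nu β ∣ s - t := GaussianInt.nu_dvd_of_dvd_intCast hβ
  exact ⟨hdvd, Int.le_of_dvd (abs_pos.2 (sub_ne_zero.2 hst)) ((dvd_abs _ _).2 hdvd)⟩

theorem common_divisor_nu_dvd_diff (α₀ δ : GaussianInt) (h : IsCoprime α₀ δ)
    (hδ : Int.gcd δ.re δ.im = 1) (s t : ℤ) (hst : s ≠ t) (β : GaussianInt)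
    (hβ : ¬ IsUnit β)
    (hs : β ∣ α₀ + (s : GaussianInt) * δ) (ht : β ∣ α₀ + (t : GaussianInt) * δ) :
    nu β ∣ s - t ∧ nu β ≤ |s - t| :=
  common_divisor_nu_dvd_diff_general α₀ δ h s t hst β hs ht
end
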